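/- Let n+1 ≥ 2 and let (M^{n+1}, g₊) be an asymptotically hyperbolic manifold with compactification ḡ = r²g₊ by a special defining function r. Then the following are equivalent: (i) g₍₁₎ = 0 in the normal-form expansion of g_r; (ii) Ric_{g₊} + n g₊ = O(1); (iii) R_{g₊} + n(n+1) = o(r) and Σ is umbilic in (M̄, ḡ). -/

import Mathlib

noncomputable section

open Filter Topology Asymptotics Set

/-- Index type for holographic coordinates on an asymptotically hyperbolic
manifold: `none` is the `∂_r` direction, `some i` are the directions tangent
to the boundary `Σ`. -/
abbrev Idx (n : ℕ) := Option (Fin n)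

/-- The data of an asymptotically hyperbolic manifold `(M^{n+1}, g₊)`
compactified as `ḡ = r²g₊ = dr² + g_r` by a special defining function `r`,
recorded in holographic coordinates at an (arbitrary but fixed) boundary point
of `Σ = ∂M̄`: the one-parameter family of metrics `g_r` on `Σ` (with `g₀ = ĝ =
(r²g₊)|_{TΣ}`) and the components of the Riemann curvature tensor of the
compactified metric `ḡ`, all as functions of `r` on the collar `[0, ε)`. -/
structure HoloData (n : ℕ) where
  /-- the size of the collar neighbourhood `Σ × [0, ε)` -/
  ε : ℝ
  ε_pos : 0 < ε
  /-- the components `(g_r)_{ij}` of the family of metrics on `Σ` -/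
  g : ℝ → Fin n → Fin n → ℝ
  g_symm : ∀ r i j, g r i j = g r j i
  g_smooth : ∀ i j, ContDiff ℝ (⊤ : ℕ∞) fun r => g r i j
  g_posdef : ∀ r ∈ Ico (0 : ℝ) ε, (Matrix.of fun i j => g r i j).PosDef
  /-- the components `R̄_{αβγδ}` of the Riemann curvature tensor of the
  compactified metric `ḡ = dr² + g_r` in holographic coordinates -/
  Rm : ℝ → Idx n → Idx n → Idx n → Idx n → ℝ
  Rm_smooth : ∀ α β γ δ, ContDiff ℝ (⊤ : ℕ∞) fun r => Rm r α β γ δ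
  Rm_antisymm_fst : ∀ r α β γ δ, Rm r β α γ δ = - Rm r α β γ δ
  Rm_antisymm_snd : ∀ r α β γ δ, Rm r α β δ γ = - Rm r α β γ δ
  Rm_pair_symm : ∀ r α β γ δ, Rm r γ δ α β = Rm r α β γ δ

namespace HoloData

variable {n : ℕ}

/-- the inverse metric `g_r⁻¹` -/
def ginv (d : HoloData n) (r : ℝ) (i j : Fin n) : ℝ :=
  ((Matrix.of fun a b => d.g r a b)⁻¹) i j

/-- the compactified metric `ḡ = dr² + g_r` -/
def gbar (d : HoloData n) (r : ℝ) : Idx n → Idx n → ℝ := fun α β =>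
  match α, β with
  | none, none => 1
  | none, some _ => 0
  | some _, none => 0
  | some i, some j => d.g r i j

/-- the inverse compactified metric `ḡ⁻¹` -/
def gbarInv (d : HoloData n) (r : ℝ) : Idx n → Idx n → ℝ := fun α β =>
  match α, β with
  | none, none => 1
  | none, some _ => 0
  | some _, none => 0
  | some i, some j => d.ginv r i j

/-- the second fundamental form `L̄_r = −½ ∂_r g_r` of the level set `Σ_r`
with respect to the compactified metric `ḡ` -/
def L (d : HoloData n) (r : ℝ) (i j : Fin n) : ℝ :=
  -(1 / 2) * deriv (fun s => d.g s i j) r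

/-- `L̂`, the second fundamental form of `(Σ, ĝ)` in `(M̄, ḡ)` -/
def Lhat (d : HoloData n) (i j : Fin n) : ℝ := d.L 0 i j

/-- `L̄_r` with the first index raised by `g_r` -/
def Lup (d : HoloData n) (r : ℝ) (i j : Fin n) : ℝ := ∑ a, d.ginv r i a * d.L r a j

/-- the mean curvature `H̄_r = tr_{g_r} L̄_r` of `Σ_r` with respect to `ḡ` -/
def Hbar (d : HoloData n) (r : ℝ) : ℝ := ∑ i, ∑ j, d.ginv r i j * d.L r i j

/-- `Ĥ`, the mean curvature of `(Σ, ĝ)` in `(M̄, ḡ)` -/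
def Hhat (d : HoloData n) : ℝ := d.Hbar 0

/-- `|L̄_r|²` -/
def Lnormsq (d : HoloData n) (r : ℝ) : ℝ :=
  ∑ i, ∑ j, ∑ k, ∑ l, d.ginv r i k * d.ginv r j l * d.L r i j * d.L r k l

/-- the Ricci tensor of `ḡ` -/
def Ric (d : HoloData n) (r : ℝ) (α β : Idx n) : ℝ :=
  ∑ μ, ∑ ν, d.gbarInv r μ ν * d.Rm r μ α ν β

/-- the scalar curvature `R_ḡ` of `ḡ` -/
def Scal (d : HoloData n) (r : ℝ) : ℝ := ∑ α, ∑ β, d.gbarInv r α β * d.Ric r α β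

/-- the Schouten tensor `P̄` of the `(n+1)`-dimensional metric `ḡ` -/
def Pbar (d : HoloData n) (r : ℝ) (α β : Idx n) : ℝ :=
  ((n : ℝ) - 1)⁻¹ * (d.Ric r α β - d.Scal r / (2 * n) * d.gbar r α β)

/-- the Weyl tensor `W̄` of `ḡ` -/
def Weyl (d : HoloData n) (r : ℝ) (α β γ δ : Idx n) : ℝ :=
  d.Rm r α β γ δ -
    (d.Pbar r α γ * d.gbar r β δ + d.Pbar r β δ * d.gbar r α γ -
      d.Pbar r α δ * d.gbar r β γ - d.Pbar r β γ * d.gbar r α δ)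

/-- the Riemann curvature tensor of the boundary metric `ĝ`, obtained from
the Gauss equation `R̄_{ijkl} = R̂_{ijkl} + L̂_{jk}L̂_{il} − L̂_{ik}L̂_{jl}` -/
def RmHat (d : HoloData n) (i j k l : Fin n) : ℝ :=
  d.Rm 0 (some i) (some j) (some k) (some l) -
    (d.Lhat j k * d.Lhat i l - d.Lhat i k * d.Lhat j l)

/-- the Ricci tensor `Ric_ĝ` of the boundary metric `ĝ` -/
def RicHat (d : HoloData n) (i j : Fin n) : ℝ := ∑ k, ∑ l, d.ginv 0 k l * d.RmHat k i l j

/-- the scalar curvature `R_ĝ` of the boundary metric `ĝ` -/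
def ScalHat (d : HoloData n) : ℝ := ∑ i, ∑ j, d.ginv 0 i j * d.RicHat i j

/-- the Schouten tensor `P_ĝ = (n−2)⁻¹ (Ric_ĝ − R_ĝ ĝ / (2(n−1)))` of `ĝ` -/
def Phat (d : HoloData n) (i j : Fin n) : ℝ :=
  ((n : ℝ) - 2)⁻¹ * (d.RicHat i j - d.ScalHat / (2 * ((n : ℝ) - 1)) * d.g 0 i j)

/-- the Weyl tensor of the boundary metric `ĝ` -/
def WeylHat (d : HoloData n) (i j k l : Fin n) : ℝ :=
  d.RmHat i j k l -
    (d.Phat i k * d.g 0 j l + d.Phat j l * d.g 0 i k -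
      d.Phat i l * d.g 0 j k - d.Phat j k * d.g 0 i l)

/-- the coefficient `g₍₁₎` in the expansion `g_r = ĝ + g₍₁₎ r + g₍₂₎ r² + O(r³)` -/
def g1 (d : HoloData n) (i j : Fin n) : ℝ := deriv (fun r => d.g r i j) 0

/-- the coefficient `g₍₂₎` in the expansion `g_r = ĝ + g₍₁₎ r + g₍₂₎ r² + O(r³)` -/
def g2 (d : HoloData n) (i j : Fin n) : ℝ :=
  (1 / 2) * iteratedDeriv 2 (fun r => d.g r i j) 0

/-- `(M, g₊)` is weakly Poincaré–Einstein: `g₍₁₎ = 0` and `g₍₂₎ = −P_ĝ` -/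
def IsWPE (d : HoloData n) : Prop :=
  (∀ i j, d.g1 i j = 0) ∧ ∀ i j, d.g2 i j = - d.Phat i j

/-- `Σ` is umbilic in `(M̄, ḡ)`: the trace-free part of `L̂` vanishes -/
def IsUmbilic (d : HoloData n) : Prop :=
  ∀ i j, d.Lhat i j = d.Hhat / n * d.g 0 i j

/-- the components of `Ric_{g₊} + n g₊`, computed from the curvature of `ḡ`
via the exact conformal transformation law for `g₊ = r⁻²ḡ` in normal form -/
def RicPlus (d : HoloData n) (r : ℝ) : Idx n → Idx n → ℝ := fun α β =>
  match α, β with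
  | none, none => d.Ric r none none - r⁻¹ * d.Hbar r
  | none, some i => d.Ric r none (some i)
  | some i, none => d.Ric r (some i) none
  | some i, some j =>
      d.Ric r (some i) (some j) - ((n : ℝ) - 1) * r⁻¹ * d.L r i j -
        r⁻¹ * d.Hbar r * d.g r i j

/-- `R_{g₊} + n(n+1) = r² ḡ^{αβ} (Ric_{g₊} + n g₊)_{αβ}` -/
def ScalPlus (d : HoloData n) (r : ℝ) : ℝ :=
  r ^ 2 * ∑ α, ∑ β, d.gbarInv r α β * d.RicPlus r α β

/-- `Ric_{g₊} + n g₊ ≥ 0` on the collar -/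
def RicPlusNonneg (d : HoloData n) : Prop :=
  ∀ r ∈ Ioo (0 : ℝ) d.ε, ∀ v : Idx n → ℝ,
    0 ≤ ∑ α, ∑ β, v α * v β * d.RicPlus r α β

/-- `(M, g₊)` is Poincaré–Einstein: `Ric_{g₊} = −n g₊` -/
def IsPE (d : HoloData n) : Prop :=
  ∀ r ∈ Ioo (0 : ℝ) d.ε, ∀ α β, d.RicPlus r α β = 0

/-- the mean curvature of the level set `Σ_r` with respect to `g₊` -/
def Hplus (d : HoloData n) (r : ℝ) : ℝ := n + r * d.Hbar r

end HoloData


/-! ### Auxiliary lemmas -/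

section Aux

open Asymptotics

private lemma aux_isBigO_inv_mul {f : ℝ → ℝ} (hf : DifferentiableAt ℝ f 0) (h0 : f 0 = 0) :
    (fun r => r⁻¹ * f r) =O[𝓝[>] (0 : ℝ)] fun _ => (1 : ℝ) := by
  have h1 : f =O[𝓝[>] (0 : ℝ)] fun r => r := by
    have := hf.isBigO_sub
    simp only [h0, sub_zero] at this
    exact this.mono nhdsWithin_le_nhds
  have h2 := (isBigO_refl (fun r : ℝ => r⁻¹) (𝓝[>] (0 : ℝ))).mul h1
  refine h2.trans (IsBigO.of_bound 1 ?_)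
  filter_upwards [self_mem_nhdsWithin] with r hr
  have hrne : r ≠ 0 := ne_of_gt hr
  simp [inv_mul_cancel₀ hrne]

private lemma aux_eq_zero_of_isBigO {f : ℝ → ℝ} (hc : ContinuousAt f 0)
    (h : (fun r => r⁻¹ * f r) =O[𝓝[>] (0 : ℝ)] fun _ => (1 : ℝ)) : f 0 = 0 := by
  have h1 : f =ᶠ[𝓝[>] (0 : ℝ)] fun r => r * (r⁻¹ * f r) := by
    filter_upwards [self_mem_nhdsWithin] with r hr
    have hrne : r ≠ 0 := ne_of_gt hr
    field_simp
  have h2 : (fun r : ℝ => r * (r⁻¹ * f r)) =O[𝓝[>] (0 : ℝ)] fun r : ℝ => r * 1 :=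
    (isBigO_refl (fun r : ℝ => r) _).mul h
  have h3 : f =O[𝓝[>] (0 : ℝ)] fun r : ℝ => r :=
    h1.trans_isBigO (h2.congr_right fun r => mul_one r)
  have h4 : Filter.Tendsto f (𝓝[>] (0 : ℝ)) (𝓝 0) :=
    h3.trans_tendsto (Filter.tendsto_id.mono_left nhdsWithin_le_nhds)
  exact tendsto_nhds_unique (hc.tendsto.mono_left nhdsWithin_le_nhds) h4

private lemma aux_contAt_isBigO {f : ℝ → ℝ} (h : ContinuousAt f 0) :
    f =O[𝓝[>] (0 : ℝ)] fun _ => (1 : ℝ) :=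
  (h.tendsto.mono_left nhdsWithin_le_nhds).isBigO_one ℝ

private lemma aux_contDiff_det {ι : Type*} [Fintype ι] [DecidableEq ι]
    {A : ℝ → Matrix ι ι ℝ} (h : ∀ i j, ContDiff ℝ (⊤ : ℕ∞) fun r => A r i j) :
    ContDiff ℝ (⊤ : ℕ∞) fun r => (A r).det := by
  have heq : (fun r => (A r).det)
      = fun r => ∑ σ : Equiv.Perm ι, ((Equiv.Perm.sign σ : ℤ) : ℝ) * ∏ i, A r (σ i) i := by
    funext r
    rw [Matrix.det_apply]
    refine Finset.sum_congr rfl fun σ _ => ?_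
    rw [Units.smul_def, zsmul_eq_mul]
  rw [heq]
  exact ContDiff.sum fun σ _ =>
    contDiff_const.mul (contDiff_prod fun i _ => h (σ i) i)

private lemma aux_contDiff_adjugate {ι : Type*} [Fintype ι] [DecidableEq ι]
    {A : ℝ → Matrix ι ι ℝ} (h : ∀ i j, ContDiff ℝ (⊤ : ℕ∞) fun r => A r i j) (i j : ι) :
    ContDiff ℝ (⊤ : ℕ∞) fun r => (A r).adjugate i j := by
  simp only [Matrix.adjugate_apply]
  refine aux_contDiff_det fun a b => ?_
  by_cases haj : a = j
  · have heq : (fun r => (A r).updateRow j (Pi.single i 1) a b)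
        = fun _ : ℝ => (Pi.single i (1 : ℝ) : _ → ℝ) b := by
      funext r
      rw [Matrix.updateRow_apply, if_pos haj]
    rw [heq]
    exact contDiff_const
  · have heq : (fun r => (A r).updateRow j (Pi.single i 1) a b) = fun r => A r a b := by
      funext r
      rw [Matrix.updateRow_apply, if_neg haj]
    rw [heq]
    exact h a b

end Aux

namespace HoloData

variable {n : ℕ}

private lemma ginv_contDiffAt (d : HoloData n) (i j : Fin n) :
    ContDiffAt ℝ (⊤ : ℕ∞) (fun r => d.ginv r i j) 0 := by
  have hg : ∀ a b, ContDiff ℝ (⊤ : ℕ∞)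
      fun r => (Matrix.of fun a b => d.g r a b : Matrix (Fin n) (Fin n) ℝ) a b :=
    fun a b => (d.g_smooth a b).of_le (by simp)
  have hdet := aux_contDiff_det hg
  have hadj := aux_contDiff_adjugate hg i j
  have hdet0 : (Matrix.of fun a b => d.g 0 a b).det ≠ 0 :=
    ne_of_gt (d.g_posdef 0 ⟨le_rfl, d.ε_pos⟩).det_pos
  have heq : (fun r => d.ginv r i j) = fun r =>
      ((Matrix.of fun a b => d.g r a b).det)⁻¹
        * (Matrix.of fun a b => d.g r a b).adjugate i j := by
    funext r
    show ((Matrix.of fun a b => d.g r a b)⁻¹) i j = _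
    rw [Matrix.inv_def, Ring.inverse_eq_inv, Matrix.smul_apply, smul_eq_mul]
  rw [heq]
  exact (hdet.contDiffAt.inv hdet0).mul hadj.contDiffAt

private lemma L_contDiff (d : HoloData n) (i j : Fin n) :
    ContDiff ℝ (⊤ : ℕ∞) fun r => d.L r i j := by
  have hg : ContDiff ℝ (⊤ : ℕ∞) fun r => d.g r i j := (d.g_smooth i j).of_le (by simp)
  have hd : ContDiff ℝ (⊤ : ℕ∞) (deriv fun s => d.g s i j) :=
    (contDiff_infty_iff_deriv.mp hg).2
  show ContDiff ℝ (⊤ : ℕ∞) fun r => -(1 / 2) * deriv (fun s => d.g s i j) r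
  exact contDiff_const.mul hd

private lemma Hbar_contDiffAt (d : HoloData n) : ContDiffAt ℝ (⊤ : ℕ∞) d.Hbar 0 := by
  show ContDiffAt ℝ (⊤ : ℕ∞) (fun r => ∑ i, ∑ j, d.ginv r i j * d.L r i j) 0
  exact ContDiffAt.sum fun i _ => ContDiffAt.sum fun j _ =>
    (d.ginv_contDiffAt i j).mul (d.L_contDiff i j).contDiffAt

private lemma gbarInv_contDiffAt (d : HoloData n) (α β : Idx n) :
    ContDiffAt ℝ (⊤ : ℕ∞) (fun r => d.gbarInv r α β) 0 := by
  cases α with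
  | none =>
    cases β with
    | none => exact contDiffAt_const
    | some j => exact contDiffAt_const
  | some i =>
    cases β with
    | none => exact contDiffAt_const
    | some j => exact d.ginv_contDiffAt i j

private lemma Ric_contDiffAt (d : HoloData n) (α β : Idx n) :
    ContDiffAt ℝ (⊤ : ℕ∞) (fun r => d.Ric r α β) 0 := by
  show ContDiffAt ℝ (⊤ : ℕ∞) (fun r => ∑ μ, ∑ ν, d.gbarInv r μ ν * d.Rm r μ α ν β) 0
  exact ContDiffAt.sum fun μ _ => ContDiffAt.sum fun ν _ =>
    (d.gbarInv_contDiffAt μ ν).mul ((d.Rm_smooth μ α ν β).of_le (by simp)).contDiffAt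

private lemma Scal_contDiffAt (d : HoloData n) : ContDiffAt ℝ (⊤ : ℕ∞) d.Scal 0 := by
  show ContDiffAt ℝ (⊤ : ℕ∞) (fun r => ∑ α, ∑ β, d.gbarInv r α β * d.Ric r α β) 0
  exact ContDiffAt.sum fun α _ => ContDiffAt.sum fun β _ =>
    (d.gbarInv_contDiffAt α β).mul (d.Ric_contDiffAt α β)

private lemma trace_ginv_g (d : HoloData n) {r : ℝ} (hr : r ∈ Set.Ico (0 : ℝ) d.ε) :
    ∑ i, ∑ j, d.ginv r i j * d.g r i j = (n : ℝ) := by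
  have hpd := d.g_posdef r hr
  have hdet : IsUnit (Matrix.of fun a b => d.g r a b).det :=
    isUnit_iff_ne_zero.mpr (ne_of_gt hpd.det_pos)
  have hmul := Matrix.nonsing_inv_mul _ hdet
  have htr := congrArg Matrix.trace hmul
  rw [Matrix.trace_one] at htr
  have heq : ∑ i, ∑ j, d.ginv r i j * d.g r i j
      = Matrix.trace ((Matrix.of fun a b => d.g r a b)⁻¹ * (Matrix.of fun a b => d.g r a b)) := by
    simp only [Matrix.trace, Matrix.diag_apply, Matrix.mul_apply, Matrix.of_apply]
    exact Finset.sum_congr rfl fun i _ => Finset.sum_congr rfl fun j _ => by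
      rw [d.g_symm r i j]; rfl
  rw [heq, htr]
  simp

end HoloData

/-- Let `n+1 ≥ 2` and let `(M^{n+1}, g₊)` be an asymptotically
hyperbolic manifold with compactification `ḡ = r²g₊` by a special defining
function `r`.  Then the following are equivalent: (i) `g₍₁₎ = 0`;
(ii) `Ric_{g₊} + n g₊ = O(1)` (componentwise in holographic coordinates);
(iii) `R_{g₊} + n(n+1) = o(r)` and `Σ` is umbilic in `(M̄, ḡ)`. -/
theorem g1_eq_zero_characterization {n : ℕ} (hn : 2 ≤ n + 1) (d : HoloData n) :
    ((∀ i j, d.g1 i j = 0) ↔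
        ∀ α β, (fun r => d.RicPlus r α β) =O[𝓝[>] (0 : ℝ)] fun _ => (1 : ℝ)) ∧
    ((∀ i j, d.g1 i j = 0) ↔
        ((fun r => d.ScalPlus r) =o[𝓝[>] (0 : ℝ)] (fun r => r) ∧ d.IsUmbilic)) := by
  have hn1 : 1 ≤ n := by omega
  -- `g₁ = 0` iff `L̂ = 0`
  have hLg1 : ∀ i j, d.L 0 i j = -(1 / 2) * d.g1 i j := fun i j => rfl
  have hkey : (∀ i j, d.g1 i j = 0) ↔ (∀ i j, d.L 0 i j = 0) := by
    constructor
    · intro h i j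
      rw [hLg1, h i j]; ring
    · intro h i j
      have := h i j
      rw [hLg1] at this
      linarith
  have hHbar0_of : (∀ i j, d.L 0 i j = 0) → d.Hbar 0 = 0 := by
    intro h
    show (∑ i, ∑ j, d.ginv 0 i j * d.L 0 i j) = 0
    simp [h]
  -- continuity facts
  have hg_cont : ∀ i j, ContinuousAt (fun r => d.g r i j) 0 :=
    fun i j => (d.g_smooth i j).continuous.continuousAt
  have hL_cont : ∀ i j, ContinuousAt (fun r => d.L r i j) 0 :=
    fun i j => (d.L_contDiff i j).continuous.continuousAt
  have hL_diff : ∀ i j, DifferentiableAt ℝ (fun r => d.L r i j) 0 :=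
    fun i j => ((d.L_contDiff i j).differentiable (by simp)).differentiableAt
  have hH_cont : ContinuousAt d.Hbar 0 := d.Hbar_contDiffAt.continuousAt
  have hH_diff : DifferentiableAt ℝ d.Hbar 0 :=
    d.Hbar_contDiffAt.differentiableAt (by simp)
  -- component formulas for RicPlus
  have eq00 : ∀ r : ℝ, d.RicPlus r none none = d.Ric r none none - r⁻¹ * d.Hbar r :=
    fun r => rfl
  have eqss : ∀ (r : ℝ) i j, d.RicPlus r (some i) (some j) =
      d.Ric r (some i) (some j) - ((n : ℝ) - 1) * r⁻¹ * d.L r i j -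
        r⁻¹ * d.Hbar r * d.g r i j := fun r i j => rfl
  -- the key pointwise formula for ScalPlus on the collar
  have hev : (fun r => d.ScalPlus r)
      =ᶠ[𝓝[>] (0 : ℝ)] fun r => r * (r * d.Scal r - 2 * (n : ℝ) * d.Hbar r) := by
    filter_upwards [Ioo_mem_nhdsGT_of_mem (Set.left_mem_Ico.mpr d.ε_pos)] with r hr
    have hr0 : (0 : ℝ) < r := hr.1
    have hrne : r ≠ 0 := ne_of_gt hr0
    have htr : ∑ i, ∑ j, d.ginv r i j * d.g r i j = (n : ℝ) :=
      d.trace_ginv_g ⟨hr0.le, hr.2⟩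
    have hfac : ∀ (c : ℝ) (F : Fin n → Fin n → ℝ),
        ∑ i, ∑ j, d.ginv r i j * (c * F i j) = c * ∑ i, ∑ j, d.ginv r i j * F i j := by
      intro c F
      rw [Finset.mul_sum]
      refine Finset.sum_congr rfl fun i _ => ?_
      rw [Finset.mul_sum]
      exact Finset.sum_congr rfl fun j _ => by ring
    have hexp : ∑ α, ∑ β, d.gbarInv r α β * d.RicPlus r α β
        = d.Scal r - 2 * (n : ℝ) * (r⁻¹ * d.Hbar r) := by
      have hsplit : ∀ (i j : Fin n),
          d.ginv r i j * (d.Ric r (some i) (some j) - ((n : ℝ) - 1) * r⁻¹ * d.L r i j -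
            r⁻¹ * d.Hbar r * d.g r i j)
          = d.ginv r i j * d.Ric r (some i) (some j)
            - d.ginv r i j * ((((n : ℝ) - 1) * r⁻¹) * d.L r i j)
            - d.ginv r i j * ((r⁻¹ * d.Hbar r) * d.g r i j) := fun i j => by ring
      simp only [HoloData.Scal, HoloData.gbarInv, HoloData.RicPlus, Fintype.sum_option,
        one_mul, zero_mul, Finset.sum_const_zero, add_zero, zero_add]
      simp only [hsplit, Finset.sum_sub_distrib]
      rw [hfac (((n : ℝ) - 1) * r⁻¹) (fun i j => d.L r i j),
        hfac (r⁻¹ * d.Hbar r) (fun i j => d.g r i j), htr]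
      have hHb : d.Hbar r = ∑ i, ∑ j, d.ginv r i j * d.L r i j := rfl
      rw [← hHb]
      ring
    show r ^ 2 * (∑ α, ∑ β, d.gbarInv r α β * d.RicPlus r α β) = _
    rw [hexp]
    field_simp
  constructor
  · -- (i) ↔ (ii)
    constructor
    · intro hg1
      have hP := hkey.mp hg1
      have hH0 := hHbar0_of hP
      have hO_Hinv : (fun r => r⁻¹ * d.Hbar r) =O[𝓝[>] (0 : ℝ)] fun _ => (1 : ℝ) :=
        aux_isBigO_inv_mul hH_diff hH0
      intro α β
      cases α with
      | none =>
        cases β with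
        | none =>
          have h1 := aux_contAt_isBigO (d.Ric_contDiffAt none none).continuousAt
          exact (h1.sub hO_Hinv).congr_left fun r => (eq00 r).symm
        | some i =>
          exact aux_contAt_isBigO (d.Ric_contDiffAt none (some i)).continuousAt
      | some i =>
        cases β with
        | none =>
          exact aux_contAt_isBigO (d.Ric_contDiffAt (some i) none).continuousAt
        | some j =>
          have hRic := aux_contAt_isBigO (d.Ric_contDiffAt (some i) (some j)).continuousAt
          have hL1 : (fun r => r⁻¹ * d.L r i j) =O[𝓝[>] (0 : ℝ)] fun _ => (1 : ℝ) :=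
            aux_isBigO_inv_mul (hL_diff i j) (hP i j)
          have hL2 : (fun r => ((n : ℝ) - 1) * r⁻¹ * d.L r i j)
              =O[𝓝[>] (0 : ℝ)] fun _ => (1 : ℝ) :=
            (hL1.const_mul_left ((n : ℝ) - 1)).congr_left fun r => by ring
          have hHg : (fun r => r⁻¹ * d.Hbar r * d.g r i j)
              =O[𝓝[>] (0 : ℝ)] fun _ => (1 : ℝ) :=
            (hO_Hinv.mul (aux_contAt_isBigO (hg_cont i j))).congr_right fun _ => one_mul 1
          exact ((hRic.sub hL2).sub hHg).congr_left fun r => (eqss r i j).symm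
    · intro hO
      have hRic00 := aux_contAt_isBigO (d.Ric_contDiffAt none none).continuousAt
      have hO_Hinv : (fun r => r⁻¹ * d.Hbar r) =O[𝓝[>] (0 : ℝ)] fun _ => (1 : ℝ) := by
        refine (hRic00.sub (hO none none)).congr_left fun r => ?_
        rw [eq00]; ring
      have hHbar0 : d.Hbar 0 = 0 := aux_eq_zero_of_isBigO hH_cont hO_Hinv
      apply hkey.mpr
      by_cases hn2 : 2 ≤ n
      · intro i j
        have h1 : (fun r => ((n : ℝ) - 1) * (r⁻¹ * d.L r i j))
            =O[𝓝[>] (0 : ℝ)] fun _ => (1 : ℝ) := by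
          have hgO := aux_contAt_isBigO (hg_cont i j)
          have h2 := (aux_contAt_isBigO
            (d.Ric_contDiffAt (some i) (some j)).continuousAt).sub (hO (some i) (some j))
          have hHg : (fun r => r⁻¹ * d.Hbar r * d.g r i j)
              =O[𝓝[>] (0 : ℝ)] fun _ => (1 : ℝ) :=
            (hO_Hinv.mul hgO).congr_right fun _ => one_mul 1
          refine (h2.sub hHg).congr_left fun r => ?_
          rw [eqss]; ring
        have hne : ((n : ℝ) - 1) ≠ 0 := by
          have : (2 : ℝ) ≤ (n : ℝ) := by exact_mod_cast hn2
          linarith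
        have hterm : (fun r => r⁻¹ * d.L r i j) =O[𝓝[>] (0 : ℝ)] fun _ => (1 : ℝ) :=
          (isBigO_const_mul_left_iff hne).mp h1
        exact aux_eq_zero_of_isBigO (hL_cont i j) hterm
      · have hne1 : n = 1 := by omega
        subst hne1
        intro i j
        have h00 : d.ginv 0 0 0 * d.g 0 0 0 = 1 := by
          have := d.trace_ginv_g (r := 0) ⟨le_rfl, d.ε_pos⟩
          simpa [Fin.sum_univ_one] using this
        have hginv_ne : d.ginv 0 0 0 ≠ 0 := by
          intro h
          rw [h, zero_mul] at h00
          norm_num at h00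
        have hH : d.ginv 0 0 0 * d.L 0 0 0 = 0 := by
          have h := hHbar0
          rw [show d.Hbar 0 = ∑ a : Fin 1, ∑ b : Fin 1, d.ginv 0 a b * d.L 0 a b from rfl,
            Fin.sum_univ_one, Fin.sum_univ_one] at h
          exact h
        have hL00 : d.L 0 0 0 = 0 := by
          rcases mul_eq_zero.mp hH with h | h
          · exact absurd h hginv_ne
          · exact h
        have hi : i = 0 := Subsingleton.elim i 0
        have hj : j = 0 := Subsingleton.elim j 0
        rw [hi, hj]
        exact hL00
  · -- (i) ↔ (iii)
    constructor
    · intro hg1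
      have hP := hkey.mp hg1
      have hH0 := hHbar0_of hP
      refine ⟨?_, ?_⟩
      · have hφ : Tendsto (fun r => r * d.Scal r - 2 * (n : ℝ) * d.Hbar r)
            (𝓝[>] (0 : ℝ)) (𝓝 0) := by
          have hc : ContinuousAt (fun r => r * d.Scal r - 2 * (n : ℝ) * d.Hbar r) 0 :=
            (continuousAt_id.mul d.Scal_contDiffAt.continuousAt).sub
              (continuousAt_const.mul hH_cont)
          have h := hc.tendsto.mono_left (nhdsWithin_le_nhds (s := Set.Ioi (0 : ℝ)))
          simpa [hH0] using h
        have h1 : (fun r => r * (r * d.Scal r - 2 * (n : ℝ) * d.Hbar r))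
            =o[𝓝[>] (0 : ℝ)] fun r : ℝ => r * 1 :=
          (isBigO_refl (fun r : ℝ => r) _).mul_isLittleO ((isLittleO_one_iff ℝ).mpr hφ)
        have h2 : (fun r => r * (r * d.Scal r - 2 * (n : ℝ) * d.Hbar r))
            =o[𝓝[>] (0 : ℝ)] fun r : ℝ => r := by
          simpa using h1
        exact hev.trans_isLittleO h2
      · intro i j
        show d.L 0 i j = d.Hbar 0 / (n : ℝ) * d.g 0 i j
        rw [hP i j, hH0]
        simp
    · rintro ⟨ho, hum⟩
      have ho' : (fun r => r * (r * d.Scal r - 2 * (n : ℝ) * d.Hbar r))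
          =o[𝓝[>] (0 : ℝ)] fun r : ℝ => r := hev.symm.trans_isLittleO ho
      have h2 : (fun r : ℝ => r⁻¹ * (r * (r * d.Scal r - 2 * (n : ℝ) * d.Hbar r)))
          =o[𝓝[>] (0 : ℝ)] fun r : ℝ => r⁻¹ * r :=
        (isBigO_refl (fun r : ℝ => r⁻¹) _).mul_isLittleO ho'
      have h3 : (fun r => r * d.Scal r - 2 * (n : ℝ) * d.Hbar r)
          =o[𝓝[>] (0 : ℝ)] fun _ => (1 : ℝ) := by
        refine h2.congr' ?_ ?_
        · filter_upwards [self_mem_nhdsWithin] with r hr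
          have hrne : r ≠ 0 := ne_of_gt hr
          field_simp
        · filter_upwards [self_mem_nhdsWithin] with r hr
          have hrne : r ≠ 0 := ne_of_gt hr
          field_simp
      have hφ0 : Tendsto (fun r => r * d.Scal r - 2 * (n : ℝ) * d.Hbar r)
          (𝓝[>] (0 : ℝ)) (𝓝 0) := (isLittleO_one_iff ℝ).mp h3
      have hφc : Tendsto (fun r => r * d.Scal r - 2 * (n : ℝ) * d.Hbar r)
          (𝓝[>] (0 : ℝ)) (𝓝 (0 * d.Scal 0 - 2 * (n : ℝ) * d.Hbar 0)) := by
        have hc : ContinuousAt (fun r => r * d.Scal r - 2 * (n : ℝ) * d.Hbar r) 0 :=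
          (continuousAt_id.mul d.Scal_contDiffAt.continuousAt).sub
            (continuousAt_const.mul hH_cont)
        exact hc.tendsto.mono_left nhdsWithin_le_nhds
      have heq0 : 0 * d.Scal 0 - 2 * (n : ℝ) * d.Hbar 0 = 0 := tendsto_nhds_unique hφc hφ0
      have hH0 : d.Hbar 0 = 0 := by
        have hnn : (0 : ℝ) < (n : ℝ) := by exact_mod_cast hn1
        rw [zero_mul, zero_sub, neg_eq_zero] at heq0
        rcases mul_eq_zero.mp heq0 with h | h
        · exfalso
          rcases mul_eq_zero.mp h with h' | h'
          · norm_num at h'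
          · exact absurd h' (ne_of_gt hnn)
        · exact h
      apply hkey.mpr
      intro i j
      have h := hum i j
      rw [show d.Hhat = d.Hbar 0 from rfl, hH0] at h
      rw [show d.Lhat i j = d.L 0 i j from rfl] at h
      rw [h]
      simp
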